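/- arXiv:2006.05960 — 2 statements merged into one kernel-verified Lean document; each statement's English description precedes it below -/
import Mathlib

section
/- Consider the semi-discrete finite volume scheme dU_i/dt = −(F_{i+1/2} − F_{i−1/2})/Δx + S_i with a consistent numerical flux F_{i+1/2} = 𝓕(W_{i+1/2−}, W_{i+1/2+}) (where 𝓕(W, W) = f(W)), and suppose the reconstruction yields identical interface traces W_{i+1/2−} = W_{i+1/2+} = W_{i+1/2} at每 interface, and the source term is discretized as S_i^{(ρv)} = (f^{(ρv)}(W_{i+1/2}) − f^{(ρv)}(W_{i−1/2}))/Δx, S_i^{(E)} = (f^{(E)}(W_{i+1/2}) − f^{(E)}(W_{i−1/2}))/Δx and S_i^{(ρ)} = 0. If additionally f^{(ρ)}(W_{i+1/2}) is independent of i (constant mass flux at interfaces), then dU_i/dt = 0 for all i. -/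
theorem neg_inv_smul_add_eq_zero_of_forall_eq_div {ι 𝕜 : Type*} [Field 𝕜]
    (c : 𝕜) (v s : ι → 𝕜) (h : ∀ k, s k = v k / c) : -c⁻¹ • v + s = 0 := by
  have hs : s = c⁻¹ • v := funext fun k => (h k).trans (div_eq_inv_mul _ _)
  rw [hs, neg_smul, neg_add_cancel]

theorem well_balanced_scheme_steady_general
    (f : (Fin 3 → ℝ) → (Fin 3 → ℝ))
    (𝓕 : (Fin 3 → ℝ) → (Fin 3 → ℝ) → (Fin 3 → ℝ))
    (hcons : ∀ W, 𝓕 W W = f W)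
    (W : ℤ → (Fin 3 → ℝ))  -- `W i` is the interface state `W_{i+1/2}`
    (Δx : ℝ)
    (S : ℤ → (Fin 3 → ℝ))
    (hS0 : ∀ i, S i 0 = 0)
    (hS1 : ∀ i, S i 1 = (f (W i) 1 - f (W (i - 1)) 1) / Δx)
    (hS2 : ∀ i, S i 2 = (f (W i) 2 - f (W (i - 1)) 2) / Δx)
    (hmass : ∀ i j : ℤ, f (W i) 0 = f (W j) 0)
    (L : ℤ → (Fin 3 → ℝ))
    (hL : ∀ i, L i = -(Δx)⁻¹ • (𝓕 (W i) (W i) - 𝓕 (W (i - 1)) (W (i - 1))) + S i) :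
    ∀ i, L i = 0 := by
  intro i
  rw [hL i, hcons, hcons]
  -- Constant mass flux makes the density component of the discrete flux gradient vanish too,
  -- so the source term equals that gradient in every component.
  refine neg_inv_smul_add_eq_zero_of_forall_eq_div _ _ _ fun k => ?_
  match k with
  | 0 => rw [hS0, Pi.sub_apply, hmass i (i - 1), sub_self, zero_div]
  | 1 => exact hS1 i
  | 2 => exact hS2 i

/-- Well-balanced property of the semi-discrete finite volume scheme: if a
consistent numerical flux receives identical traces `W_{i+1/2−} = W_{i+1/2+} =
W_{i+1/2}` at each interface, the source term is discretized in flux-difference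
form (momentum and energy components), and the mass flux `f^{(ρ)}(W_{i+1/2})`
is the same at all interfaces, then the scheme's right-hand side vanishes:
`dU_i/dt = 0` for all cells `i`. -/
theorem well_balanced_scheme_steady
    (f : (Fin 3 → ℝ) → (Fin 3 → ℝ))
    (𝓕 : (Fin 3 → ℝ) → (Fin 3 → ℝ) → (Fin 3 → ℝ))
    (hcons : ∀ W, 𝓕 W W = f W)
    (W : ℤ → (Fin 3 → ℝ))  -- `W i` is the interface state `W_{i+1/2}`
    (Δx : ℝ) (hΔx : 0 < Δx)
    (S : ℤ → (Fin 3 → ℝ))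
    (hS0 : ∀ i, S i 0 = 0)
    (hS1 : ∀ i, S i 1 = (f (W i) 1 - f (W (i - 1)) 1) / Δx)
    (hS2 : ∀ i, S i 2 = (f (W i) 2 - f (W (i - 1)) 2) / Δx)
    (hmass : ∀ i j : ℤ, f (W i) 0 = f (W j) 0)
    (L : ℤ → (Fin 3 → ℝ))
    (hL : ∀ i, L i = -(Δx)⁻¹ • (𝓕 (W i) (W i) - 𝓕 (W (i - 1)) (W (i - 1))) + S i) :
    ∀ i, L i = 0 :=
  well_balanced_scheme_steady_general f 𝓕 hcons W Δx S hS0 hS1 hS2 hmass L hL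
end

section
/- For the steady adiabatic flow ODE defined implicitly by e(ρ(x)) = B₀ − φ(x) on the subsonic branch (ρ > ρ*), with φ continuously differentiable and B₀ − φ(x) > e* on an interval I, the implicit function theorem gives a unique C¹ solution ρ : I → (ρ*, ∞), and it satisfies ρ'(x) = −φ'(x)/e'(ρ(x)) with e'(ρ) = c²(ρ)/ρ − m₀²/ρ³ > 0. -/
/-! Since `ρ*` is exactly the density where `γ K ρ^(γ+1) = m₀²`, the derivative
`e'(ρ) = (γ K ρ^(γ+1) - m₀²) / ρ³` is positive on `(ρ*, ∞)`. So `e` is a continuous strictly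
increasing map of `[ρ*, ∞)` onto `[e*, ∞)` (it tends to `∞`), and the subsonic solution is forced
to be `ρ = e⁻¹ ∘ (B₀ - φ)`, with `e⁻¹` the inverse of `e` on `(ρ*, ∞)`. A monotone surjection onto
an interval has a continuous inverse, so the one-dimensional inverse function theorem applies:
`(e⁻¹)' = 1 / e' ∘ e⁻¹`, and the chain rule gives `ρ' = -φ' / e'(ρ)`. -/

open Set Filter Topology Function

section InverseOnIoi

variable {f f' : ℝ → ℝ} {a : ℝ}

theorem strictMonoOn_Ici_of_hasDerivAt_pos (hf : ∀ r ∈ Ici a, HasDerivAt f (f' r) r)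
    (hf' : ∀ r ∈ Ioi a, 0 < f' r) : StrictMonoOn f (Ici a) :=
  strictMonoOn_of_hasDerivWithinAt_pos (convex_Ici a)
    (fun r hr => (hf r hr).continuousAt.continuousWithinAt)
    (by simpa only [interior_Ici] using
      fun r hr => (hf r (Ioi_subset_Ici_self hr)).hasDerivWithinAt)
    (by simpa only [interior_Ici] using hf')

theorem image_Ioi_eq_Ioi_of_strictMonoOn_of_tendsto (hmono : StrictMonoOn f (Ici a))
    (hcont : ContinuousOn f (Ici a)) (htop : Tendsto f atTop atTop) :
    f '' Ioi a = Ioi (f a) := by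
  refine (image_subset_iff.2 fun r hr => hmono self_mem_Ici (Ioi_subset_Ici_self hr) hr).antisymm
    fun y hy => ?_
  obtain ⟨r, hr, rfl⟩ := intermediate_value_Ici hcont htop (Ioi_subset_Ici_self hy)
  refine ⟨r, mem_Ioi.2 (lt_of_le_of_ne hr ?_), rfl⟩
  rintro rfl
  exact lt_irrefl _ (mem_Ioi.1 hy)

theorem hasDerivAt_invFunOn_Ioi (hf : ∀ r ∈ Ici a, HasDerivAt f (f' r) r)
    (hf' : ∀ r ∈ Ioi a, 0 < f' r) (htop : Tendsto f atTop atTop) {y : ℝ} (hy : f a < y) :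
    HasDerivAt (invFunOn f (Ioi a)) (f' (invFunOn f (Ioi a) y))⁻¹ y := by
  set g := invFunOn f (Ioi a)
  have hmono := strictMonoOn_Ici_of_hasDerivAt_pos hf hf'
  have himage := image_Ioi_eq_Ioi_of_strictMonoOn_of_tendsto hmono
    (fun r hr => (hf r hr).continuousAt.continuousWithinAt) htop
  have hsurj : SurjOn f (Ioi a) (Ioi (f a)) := himage.ge
  have hg_mem : MapsTo g (Ioi (f a)) (Ioi a) := hsurj.mapsTo_invFunOn
  have hfg : RightInvOn g f (Ioi (f a)) := hsurj.rightInvOn_invFunOn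
  have hg_mono : StrictMonoOn g (Ioi (f a)) := fun y₁ hy₁ y₂ hy₂ hlt =>
    (hmono.lt_iff_lt (Ioi_subset_Ici_self (hg_mem hy₁)) (Ioi_subset_Ici_self (hg_mem hy₂))).1
      (by rwa [hfg hy₁, hfg hy₂])
  have hg_image : g '' Ioi (f a) = Ioi a := by
    rw [← himage]
    exact (hmono.injOn.mono Ioi_subset_Ici_self).invFunOn_image subset_rfl
  have hg_cont : ContinuousAt g y :=
    hg_mono.continuousAt_of_image_mem_nhds (isOpen_Ioi.mem_nhds hy)
      (hg_image ▸ isOpen_Ioi.mem_nhds (hg_mem hy))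
  exact (hf _ (Ioi_subset_Ici_self (hg_mem hy))).of_local_left_inverse hg_cont
    (hf' _ (hg_mem hy)).ne'
    (eventually_of_mem (isOpen_Ioi.mem_nhds hy) fun z hz => hfg hz)

end InverseOnIoi

section IdealGas

variable {γ K m₀ : ℝ}

theorem hasDerivAt_bernoulli_energy (hγ : γ ≠ 1) {r : ℝ} (hr : r ≠ 0) :
    HasDerivAt (fun ρ => m₀ ^ 2 / (2 * ρ ^ 2) + γ / (γ - 1) * K * ρ ^ (γ - 1))
      (γ * K * r ^ (γ - 1) / r - m₀ ^ 2 / r ^ 3) r := by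
  have hkin : HasDerivAt (fun ρ : ℝ => m₀ ^ 2 / (2 * ρ ^ 2)) (-(m₀ ^ 2) / r ^ 3) r := by
    refine ((hasDerivAt_const r (m₀ ^ 2)).fun_div ((hasDerivAt_pow 2 r).const_mul 2)
      (by positivity)).congr_deriv ?_
    field_simp
    ring
  have henth := (Real.hasDerivAt_rpow_const (p := γ - 1) (Or.inl hr)).const_mul (γ / (γ - 1) * K)
  refine (hkin.fun_add henth).congr_deriv ?_
  rw [Real.rpow_sub_one hr (γ - 1)]
  have : γ - 1 ≠ 0 := sub_ne_zero.2 hγ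
  field_simp
  ring

theorem bernoulli_deriv_eq {r : ℝ} (hr : 0 < r) :
    γ * K * r ^ (γ - 1) / r - m₀ ^ 2 / r ^ 3 = (γ * K * r ^ (γ + 1) - m₀ ^ 2) / r ^ 3 := by
  rw [show γ + 1 = (γ - 1) + (2 : ℕ) by push_cast; ring, Real.rpow_add hr, Real.rpow_natCast]
  field_simp

theorem bernoulli_deriv_pos (hγK : 0 < γ * K) (hγ : 0 < γ + 1) {r : ℝ}
    (hr : (m₀ ^ 2 / (γ * K)) ^ (1 / (γ + 1)) < r) :
    0 < γ * K * r ^ (γ - 1) / r - m₀ ^ 2 / r ^ 3 := by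
  have hr0 : 0 < r := (Real.rpow_nonneg (by positivity) _).trans_lt hr
  rw [one_div, Real.rpow_inv_lt_iff_of_pos (by positivity) hr0.le hγ, div_lt_iff₀ hγK] at hr
  rw [bernoulli_deriv_eq hr0]
  exact div_pos (by linarith) (by positivity)

theorem tendsto_bernoulli_energy_atTop (hγ : 1 < γ) (hK : 0 < K) :
    Tendsto (fun ρ => m₀ ^ 2 / (2 * ρ ^ 2) + γ / (γ - 1) * K * ρ ^ (γ - 1)) atTop atTop := by
  have hkin : Tendsto (fun ρ : ℝ => m₀ ^ 2 / (2 * ρ ^ 2)) atTop (𝓝 0) :=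
    tendsto_const_nhds.div_atTop ((tendsto_pow_atTop two_ne_zero).const_mul_atTop two_pos)
  have hγ1 : 0 < γ - 1 := sub_pos.2 hγ
  exact hkin.add_atTop ((tendsto_rpow_atTop hγ1).const_mul_atTop (by positivity))

end IdealGas

theorem subsonic_implicit_equilibrium_general
    (K γ m₀ B₀ : ℝ) (hK : 0 < K) (hγ : 1 < γ) (hm : m₀ ≠ 0)
    (e : ℝ → ℝ) (he : ∀ ρ, e ρ = m₀ ^ 2 / (2 * ρ ^ 2) + γ / (γ - 1) * K * ρ ^ (γ - 1))
    (e' : ℝ → ℝ) (he' : ∀ ρ, e' ρ = (γ * K * ρ ^ (γ - 1)) / ρ - m₀ ^ 2 / ρ ^ 3)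
    (ρs : ℝ) (hρs : ρs = (m₀ ^ 2 / (γ * K)) ^ (1 / (γ + 1)))
    (I : Set ℝ)
    (φ φ' : ℝ → ℝ)
    (hφ : ∀ x ∈ I, HasDerivAt φ (φ' x) x)
    (hlevel : ∀ x ∈ I, e ρs < B₀ - φ x) :
    (∀ ρ ∈ Set.Ioi ρs, 0 < e' ρ) ∧
    ∃ ρ : ℝ → ℝ,
      (∀ x ∈ I, ρs < ρ x ∧ e (ρ x) = B₀ - φ x) ∧
      (∀ x ∈ I, HasDerivAt ρ (-φ' x / e' (ρ x)) x) ∧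
      (∀ σ : ℝ → ℝ, (∀ x ∈ I, ρs < σ x ∧ e (σ x) = B₀ - φ x) →
        ∀ x ∈ I, σ x = ρ x) := by
  have hγK : 0 < γ * K := by positivity
  have hρs0 : 0 < ρs := hρs ▸ Real.rpow_pos_of_pos (by positivity) _
  have hE : e = fun ρ => m₀ ^ 2 / (2 * ρ ^ 2) + γ / (γ - 1) * K * ρ ^ (γ - 1) := funext he
  have hderiv : ∀ r ∈ Ici ρs, HasDerivAt e (e' r) r := fun r hr => by
    rw [hE, he']
    exact hasDerivAt_bernoulli_energy hγ.ne' (hρs0.trans_le hr).ne'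
  have hpos : ∀ r ∈ Ioi ρs, 0 < e' r := fun r hr =>
    he' r ▸ bernoulli_deriv_pos hγK (by linarith) (hρs ▸ hr)
  have htop : Tendsto e atTop atTop := hE ▸ tendsto_bernoulli_energy_atTop hγ hK
  have hmono := strictMonoOn_Ici_of_hasDerivAt_pos hderiv hpos
  have hsurj : SurjOn e (Ioi ρs) (Ioi (e ρs)) := (image_Ioi_eq_Ioi_of_strictMonoOn_of_tendsto hmono
    (fun r hr => (hderiv r hr).continuousAt.continuousWithinAt) htop).ge
  have hsol : ∀ x ∈ I,
      ρs < invFunOn e (Ioi ρs) (B₀ - φ x) ∧ e (invFunOn e (Ioi ρs) (B₀ - φ x)) = B₀ - φ x :=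
    fun x hx => ⟨hsurj.mapsTo_invFunOn (hlevel x hx), hsurj.rightInvOn_invFunOn (hlevel x hx)⟩
  refine ⟨hpos, fun x => invFunOn e (Ioi ρs) (B₀ - φ x), hsol, fun x hx => ?_, ?_⟩
  · rw [div_eq_inv_mul]
    exact (hasDerivAt_invFunOn_Ioi hderiv hpos htop (hlevel x hx)).comp x ((hφ x hx).const_sub B₀)
  · intro σ hσ x hx
    exact hmono.injOn (hσ x hx).1.le (hsol x hx).1.le ((hσ x hx).2.trans (hsol x hx).2.symm)

/-- On the subsonic branch, the implicit equation `e(ρ(x)) = B₀ − φ(x)` with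
`φ ∈ C¹` and `B₀ − φ(x) > e*` on an open interval `I` defines a unique function
`ρ : I → (ρ*, ∞)`, which is differentiable with
`ρ'(x) = −φ'(x)/e'(ρ(x))`, where `e'(ρ) = c²(ρ)/ρ − m₀²/ρ³ > 0` on `(ρ*, ∞)`. -/
theorem subsonic_implicit_equilibrium
    (K γ m₀ B₀ : ℝ) (hK : 0 < K) (hγ : 1 < γ) (hm : m₀ ≠ 0)
    (e : ℝ → ℝ) (he : ∀ ρ, e ρ = m₀ ^ 2 / (2 * ρ ^ 2) + γ / (γ - 1) * K * ρ ^ (γ - 1))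
    (e' : ℝ → ℝ) (he' : ∀ ρ, e' ρ = (γ * K * ρ ^ (γ - 1)) / ρ - m₀ ^ 2 / ρ ^ 3)
    (ρs : ℝ) (hρs : ρs = (m₀ ^ 2 / (γ * K)) ^ (1 / (γ + 1)))
    (I : Set ℝ) (hI : IsOpen I)
    (φ φ' : ℝ → ℝ)
    (hφ : ∀ x ∈ I, HasDerivAt φ (φ' x) x)
    (hφcont : ContinuousOn φ' I)
    (hlevel : ∀ x ∈ I, e ρs < B₀ - φ x) :
    (∀ ρ ∈ Set.Ioi ρs, 0 < e' ρ) ∧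
    ∃ ρ : ℝ → ℝ,
      (∀ x ∈ I, ρs < ρ x ∧ e (ρ x) = B₀ - φ x) ∧
      (∀ x ∈ I, HasDerivAt ρ (-φ' x / e' (ρ x)) x) ∧
      (∀ σ : ℝ → ℝ, (∀ x ∈ I, ρs < σ x ∧ e (σ x) = B₀ - φ x) →
        ∀ x ∈ I, σ x = ρ x) :=
  subsonic_implicit_equilibrium_general K γ m₀ B₀ hK hγ hm e he e' he' ρs hρs I φ φ' hφ hlevel
end
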